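/- Under the hypotheses of the frame decomposition ω − L = g_{·3}×g_{·1} ∂₃^ψ u₁^ψ + g_{·3}×g_{·2} ∂₃^ψ u₂^ψ with g ∈ SO(3) pointwise, one can solve for the normal derivatives: ∂₃^ψ u₁^ψ = (ω − L)·g_{·2} and ∂₃^ψ u₂^ψ = −(ω − L)·g_{·1}; combined with the divergence identity for ∂₃^ψ u₃^ψ, this yields ‖∂_n u‖_{L^∞(U)} ≤ C(‖ω‖_{L^∞(U)} + ‖u‖_{W^{1,∞}_tan(U)}). -/

import Mathlib

open Matrix

noncomputable def pd (f : (Fin 3 → ℝ) → ℝ) (i : Fin 3) (x : Fin 3 → ℝ) : ℝ :=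
  fderiv ℝ f x (Pi.single i 1)

noncomputable def curl3 (u : (Fin 3 → ℝ) → Fin 3 → ℝ) (x : Fin 3 → ℝ) : Fin 3 → ℝ :=
  ![pd (fun y => u y 2) 1 x - pd (fun y => u y 1) 2 x,
    pd (fun y => u y 0) 2 x - pd (fun y => u y 2) 0 x,
    pd (fun y => u y 1) 0 x - pd (fun y => u y 0) 1 x]

/-- Frame derivative `∂_l^ψ = ∑_j g_{jl} ∂_j`. -/
noncomputable def framePd (g : (Fin 3 → ℝ) → Matrix (Fin 3) (Fin 3) ℝ)
    (l : Fin 3) (f : (Fin 3 → ℝ) → ℝ) (x : Fin 3 → ℝ) : ℝ :=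
  ∑ j, g x j l * pd f j x

/-- Frame component `u_m^ψ = ∑_k g_{km} u_k`. -/
noncomputable def frameComp (g : (Fin 3 → ℝ) → Matrix (Fin 3) (Fin 3) ℝ)
    (u : (Fin 3 → ℝ) → Fin 3 → ℝ) (m : Fin 3) (x : Fin 3 → ℝ) : ℝ :=
  ∑ k, g x k m * u x k

lemma pd_congr' {f h : (Fin 3 → ℝ) → ℝ} {x : Fin 3 → ℝ} (hfh : f =ᶠ[nhds x] h) (i : Fin 3) :
    pd f i x = pd h i x := by unfold pd; rw [hfh.fderiv_eq]

lemma pd_mul' {f h : (Fin 3 → ℝ) → ℝ} {x : Fin 3 → ℝ} (hf : DifferentiableAt ℝ f x)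
    (hh : DifferentiableAt ℝ h x) (i : Fin 3) :
    pd (fun y => f y * h y) i x = f x * pd h i x + pd f i x * h x := by
  unfold pd; rw [fderiv_fun_mul hf hh]; simp [mul_comm]

lemma pd_sum' {F : Fin 3 → (Fin 3 → ℝ) → ℝ} {x : Fin 3 → ℝ}
    (hF : ∀ k, DifferentiableAt ℝ (F k) x) (i : Fin 3) :
    pd (fun y => ∑ k, F k y) i x = ∑ k, pd (F k) i x := by
  unfold pd; rw [fderiv_fun_sum (fun k _ => hF k)]; simp

lemma habs3 (f : Fin 3 → ℝ) (b : ℝ) (hb : ∀ j, |f j| ≤ b) : |∑ j, f j| ≤ 3 * b := by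
  calc |∑ j, f j| ≤ ∑ j, |f j| := Finset.abs_sum_le_sum_abs _ _
    _ ≤ ∑ _j : Fin 3, b := Finset.sum_le_sum (fun j _ => hb j)
    _ = 3 * b := by simp [Fin.sum_univ_three]

lemma hmul' {a b A B : ℝ} (ha : |a| ≤ A) (hb : |b| ≤ B) : |a * b| ≤ A * B := by
  rw [abs_mul]
  exact mul_le_mul ha hb (abs_nonneg _) ((abs_nonneg a).trans ha)

set_option maxHeartbeats 1000000 in
/-- given the decomposition
`ω − L = (g_{·3}×g_{·1}) ∂₃^ψ u₁^ψ + (g_{·3}×g_{·2}) ∂₃^ψ u₂^ψ` with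
`g ∈ SO(3)` pointwise, one can solve `∂₃^ψ u₁^ψ = (ω−L)·g_{·2}` and
`∂₃^ψ u₂^ψ = −(ω−L)·g_{·1}`; combined with the divergence identity for
`∂₃^ψ u₃^ψ`, this yields
`‖∂_n u‖_{L^∞(U)} ≤ C(‖ω‖_{L^∞(U)} + ‖u‖_{W^{1,∞}_tan(U)})`. -/
theorem stmt18 (U : Set (Fin 3 → ℝ)) (hU : IsOpen U)
    (u : (Fin 3 → ℝ) → Fin 3 → ℝ) (hu : ContDiff ℝ 1 u)
    (hdiv : ∀ x ∈ U, ∑ i, pd (fun y => u y i) i x = 0)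
    (g : (Fin 3 → ℝ) → Matrix (Fin 3) (Fin 3) ℝ)
    (hg : ∀ i j : Fin 3, ContDiff ℝ 1 (fun x => g x i j))
    (hgO : ∀ x ∈ U, (g x).transpose * g x = 1)
    (hgdet : ∀ x ∈ U, (g x).det = 1)
    (Kg : ℝ)
    (hKg : ∀ x ∈ U, ∀ i j k : Fin 3,
      |g x i j| ≤ Kg ∧ |pd (fun y => g y i j) k x| ≤ Kg)
    (L : (Fin 3 → ℝ) → Fin 3 → ℝ)
    (hL : ∀ x ∈ U, curl3 u x - L x =
      framePd g 2 (frameComp g u 0) x • crossProduct (fun j => g x j 2) (fun j => g x j 0)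
      + framePd g 2 (frameComp g u 1) x • crossProduct (fun j => g x j 2) (fun j => g x j 1))
    (Mω Mtan : ℝ)
    (hML : ∀ x ∈ U, ∀ j : Fin 3, |L x j| ≤ Mtan)
    (hω : ∀ x ∈ U, ∀ j : Fin 3, |curl3 u x j| ≤ Mω)
    (htan : ∀ x ∈ U, ∀ i : Fin 3,
      |u x i| ≤ Mtan ∧ |framePd g 0 (fun y => u y i) x| ≤ Mtan ∧
        |framePd g 1 (fun y => u y i) x| ≤ Mtan) :
    (∀ x ∈ U,
      framePd g 2 (frameComp g u 0) x = (curl3 u x - L x) ⬝ᵥ (fun j => g x j 1) ∧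
      framePd g 2 (frameComp g u 1) x = -((curl3 u x - L x) ⬝ᵥ (fun j => g x j 0))) ∧
    ∃ C : ℝ, 0 < C ∧ ∀ x ∈ U, ∀ i : Fin 3,
      |framePd g 2 (fun y => u y i) x| ≤ C * (Mω + Mtan) := by
  -- global differentiability facts
  have hud : ∀ k : Fin 3, Differentiable ℝ (fun y => u y k) :=
    fun k => (differentiable_pi.mp (hu.differentiable one_ne_zero)) k
  have hgd : ∀ i j : Fin 3, Differentiable ℝ (fun x => g x i j) :=
    fun i j => (hg i j).differentiable one_ne_zero
  have hvd : ∀ m : Fin 3, Differentiable ℝ (frameComp g u m) := by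
    intro m
    have h1 : frameComp g u m = fun y => ∑ k, g y k m * u y k := rfl
    rw [h1]
    exact Differentiable.fun_sum (fun k _ => (hgd k m).mul (hud k))
  -- Part 1
  have key1 : ∀ x ∈ U,
      framePd g 2 (frameComp g u 0) x = (curl3 u x - L x) ⬝ᵥ (fun j => g x j 1) ∧
      framePd g 2 (frameComp g u 1) x = -((curl3 u x - L x) ⬝ᵥ (fun j => g x j 0)) := by
    intro x hx
    have hdet3 := hgdet x hx
    rw [Matrix.det_fin_three] at hdet3
    constructor
    · rw [hL x hx]
      simp only [dotProduct, Pi.add_apply, Pi.smul_apply, smul_eq_mul, cross_apply,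
        Fin.sum_univ_three, Matrix.cons_val_zero, Matrix.cons_val_one, Matrix.head_cons,
        Matrix.cons_val_two, Matrix.tail_cons]
      linear_combination (-(framePd g 2 (frameComp g u 0) x)) * hdet3
    · rw [hL x hx]
      simp only [dotProduct, Pi.add_apply, Pi.smul_apply, smul_eq_mul, cross_apply,
        Fin.sum_univ_three, Matrix.cons_val_zero, Matrix.cons_val_one, Matrix.head_cons,
        Matrix.cons_val_two, Matrix.tail_cons]
      linear_combination (-(framePd g 2 (frameComp g u 1) x)) * hdet3
  refine ⟨key1, ?_⟩
  set K := max Kg 0 with hKdef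
  have hK0 : (0:ℝ) ≤ K := le_max_right _ _
  refine ⟨72*K^3 + 12*K^2 + 1, by nlinarith [pow_nonneg hK0 3, pow_nonneg hK0 2], ?_⟩
  intro x hx i
  -- pointwise bounds
  have hgb : ∀ a b : Fin 3, |g x a b| ≤ K := fun a b => le_trans (hKg x hx a b 0).1 (le_max_left _ _)
  have hpg : ∀ a b c : Fin 3, |pd (fun y => g y a b) c x| ≤ K :=
    fun a b c => le_trans (hKg x hx a b c).2 (le_max_left _ _)
  have hub : ∀ k : Fin 3, |u x k| ≤ Mtan := fun k => (htan x hx k).1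
  have hM0 : (0:ℝ) ≤ Mtan := (abs_nonneg _).trans (hub 0)
  have hMω0 : (0:ℝ) ≤ Mω := (abs_nonneg _).trans (hω x hx 0)
  -- product rule for pd of frame components
  have hpdv : ∀ m j : Fin 3, pd (frameComp g u m) j x
      = ∑ k, (g x k m * pd (fun y => u y k) j x + pd (fun y => g y k m) j x * u x k) := by
    intro m j
    have h1 : frameComp g u m = fun y => ∑ k, (fun y' => g y' k m * u y' k) y := rfl
    rw [h1, pd_sum' (fun k => ((hgd k m).fun_mul (hud k)).differentiableAt) j]
    exact Finset.sum_congr rfl fun k _ =>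
      pd_mul' ((hgd k m).differentiableAt) ((hud k).differentiableAt) j
  -- representation of cartesian components in the frame, near x
  have hrepr : ∀ i : Fin 3, (fun y => u y i)
      =ᶠ[nhds x] (fun y => ∑ m, g y i m * frameComp g u m y) := by
    intro i
    filter_upwards [hU.mem_nhds hx] with y hy
    have hO : g y * (g y)ᵀ = 1 := mul_eq_one_comm.mp (hgO y hy)
    have h1 : ∀ m, frameComp g u m y = ((g y)ᵀ *ᵥ u y) m := by
      intro m
      simp [frameComp, Matrix.mulVec, dotProduct, Matrix.transpose_apply]
    have h2 : ∑ m, g y i m * frameComp g u m y = (g y *ᵥ ((g y)ᵀ *ᵥ u y)) i := by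
      simp [Matrix.mulVec, dotProduct, h1]
    rw [h2, Matrix.mulVec_mulVec, hO, Matrix.one_mulVec]
  -- Step A
  have hstepA : framePd g 2 (fun y => u y i) x
      = ∑ m, (g x i m * framePd g 2 (frameComp g u m) x
              + framePd g 2 (fun y => g y i m) x * frameComp g u m x) := by
    have hpd : ∀ j : Fin 3, pd (fun y => u y i) j x
        = ∑ m, (g x i m * pd (frameComp g u m) j x
                + pd (fun y => g y i m) j x * frameComp g u m x) := by
      intro j
      rw [pd_congr' (hrepr i) j,
        pd_sum' (fun m => ((hgd i m).fun_mul (hvd m)).differentiableAt) j]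
      exact Finset.sum_congr rfl fun m _ =>
        pd_mul' ((hgd i m).differentiableAt) ((hvd m).differentiableAt) j
    simp only [framePd, hpd, Fin.sum_univ_three]
    ring
  -- Step B : tangential frame derivatives of frame components
  have hstepB : ∀ l m : Fin 3, framePd g l (frameComp g u m) x
      = ∑ k, (g x k m * framePd g l (fun y => u y k) x
              + framePd g l (fun y => g y k m) x * u x k) := by
    intro l m
    simp only [framePd, hpdv, Fin.sum_univ_three]
    ring
  -- bounds on frame derivative of g-entries
  have hEb : ∀ l a b : Fin 3, |framePd g l (fun y => g y a b) x| ≤ 3*(K*K) := by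
    intro l a b
    exact habs3 _ _ (fun j => hmul' (hgb j l) (hpg a b j))
  have hvb : ∀ m : Fin 3, |frameComp g u m x| ≤ 3*(K*Mtan) :=
    fun m => habs3 _ _ (fun k => hmul' (hgb k m) (hub k))
  -- tangential bounds for frame components
  have htv : ∀ m : Fin 3, (∀ l : Fin 3, l = 0 ∨ l = 1 →
      |framePd g l (frameComp g u m) x| ≤ 3*(K*Mtan + 3*(K*K)*Mtan)) := by
    intro m l hl
    rw [hstepB l m]
    refine habs3 _ _ (fun k => ?_)
    refine (abs_add_le _ _).trans (add_le_add (hmul' (hgb k m) ?_) (hmul' (hEb l k m) (hub k)))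
    rcases hl with h | h <;> subst h
    · exact (htan x hx k).2.1
    · exact (htan x hx k).2.2
  -- divergence identity
  have hOx : ∀ j k : Fin 3, g x j 0 * g x k 0 + g x j 1 * g x k 1 + g x j 2 * g x k 2
      = if j = k then (1:ℝ) else 0 := by
    intro j k
    have hO : g x * (g x)ᵀ = 1 := mul_eq_one_comm.mp (hgO x hx)
    have := congrFun (congrFun hO j) k
    simpa [Matrix.mul_apply, Matrix.one_apply, Matrix.transpose_apply, Fin.sum_univ_three]
      using this
  have e00 : g x 0 0 * g x 0 0 + g x 0 1 * g x 0 1 + g x 0 2 * g x 0 2 = 1 := by simpa using hOx 0 0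
  have e11 : g x 1 0 * g x 1 0 + g x 1 1 * g x 1 1 + g x 1 2 * g x 1 2 = 1 := by simpa using hOx 1 1
  have e22 : g x 2 0 * g x 2 0 + g x 2 1 * g x 2 1 + g x 2 2 * g x 2 2 = 1 := by simpa using hOx 2 2
  have e01 : g x 0 0 * g x 1 0 + g x 0 1 * g x 1 1 + g x 0 2 * g x 1 2 = 0 := by simpa using hOx 0 1
  have e02 : g x 0 0 * g x 2 0 + g x 0 1 * g x 2 1 + g x 0 2 * g x 2 2 = 0 := by simpa using hOx 0 2
  have e10 : g x 1 0 * g x 0 0 + g x 1 1 * g x 0 1 + g x 1 2 * g x 0 2 = 0 := by simpa using hOx 1 0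
  have e12 : g x 1 0 * g x 2 0 + g x 1 1 * g x 2 1 + g x 1 2 * g x 2 2 = 0 := by simpa using hOx 1 2
  have e20 : g x 2 0 * g x 0 0 + g x 2 1 * g x 0 1 + g x 2 2 * g x 0 2 = 0 := by simpa using hOx 2 0
  have e21 : g x 2 0 * g x 1 0 + g x 2 1 * g x 1 1 + g x 2 2 * g x 1 2 = 0 := by simpa using hOx 2 1
  have hkey : framePd g 0 (frameComp g u 0) x + framePd g 1 (frameComp g u 1) x
      + framePd g 2 (frameComp g u 2) x
      = ∑ m : Fin 3, ∑ j : Fin 3, ∑ k : Fin 3,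
          g x j m * (pd (fun y => g y k m) j x * u x k) := by
    have hd := hdiv x hx
    simp only [Fin.sum_univ_three] at hd
    simp only [framePd, hpdv, Fin.sum_univ_three]
    linear_combination hd
      + (pd (fun y => u y 0) 0 x) * e00 + (pd (fun y => u y 1) 0 x) * e01
      + (pd (fun y => u y 2) 0 x) * e02 + (pd (fun y => u y 0) 1 x) * e10
      + (pd (fun y => u y 1) 1 x) * e11 + (pd (fun y => u y 2) 1 x) * e12
      + (pd (fun y => u y 0) 2 x) * e20 + (pd (fun y => u y 1) 2 x) * e21
      + (pd (fun y => u y 2) 2 x) * e22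
  -- bound on R
  have hR : |∑ m : Fin 3, ∑ j : Fin 3, ∑ k : Fin 3,
      g x j m * (pd (fun y => g y k m) j x * u x k)| ≤ 3*(3*(3*(K*(K*Mtan)))) :=
    habs3 _ _ fun m => habs3 _ _ fun j => habs3 _ _ fun k =>
      hmul' (hgb j m) (hmul' (hpg k m j) (hub k))
  -- bounds on normal frame derivatives of frame components
  have hωL : ∀ j : Fin 3, |(curl3 u x - L x) j| ≤ Mω + Mtan := by
    intro j
    have h1 : (curl3 u x - L x) j = curl3 u x j - L x j := rfl
    rw [h1]
    exact (abs_sub _ _).trans (add_le_add (hω x hx j) (hML x hx j))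
  have hD0 : |framePd g 2 (frameComp g u 0) x| ≤ 3*((Mω+Mtan)*K) := by
    rw [(key1 x hx).1]
    exact habs3 _ _ (fun j => hmul' (hωL j) (hgb j 1))
  have hD1 : |framePd g 2 (frameComp g u 1) x| ≤ 3*((Mω+Mtan)*K) := by
    rw [(key1 x hx).2, abs_neg]
    exact habs3 _ _ (fun j => hmul' (hωL j) (hgb j 0))
  have hD2 : |framePd g 2 (frameComp g u 2) x|
      ≤ 3*(3*(3*(K*(K*Mtan)))) + (3*(K*Mtan + 3*(K*K)*Mtan) + 3*(K*Mtan + 3*(K*K)*Mtan)) := by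
    have h2 : framePd g 2 (frameComp g u 2) x
        = (∑ m : Fin 3, ∑ j : Fin 3, ∑ k : Fin 3,
            g x j m * (pd (fun y => g y k m) j x * u x k))
          - (framePd g 0 (frameComp g u 0) x + framePd g 1 (frameComp g u 1) x) := by
      linarith [hkey]
    rw [h2]
    refine (abs_sub _ _).trans (add_le_add hR ((abs_add_le _ _).trans (add_le_add ?_ ?_)))
    · exact htv 0 0 (Or.inl rfl)
    · exact htv 1 1 (Or.inr rfl)
  -- final assembly
  have hmain : |framePd g 2 (fun y => u y i) x|
      ≤ (K*(3*((Mω+Mtan)*K)) + 3*(K*K)*(3*(K*Mtan)))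
      + (K*(3*((Mω+Mtan)*K)) + 3*(K*K)*(3*(K*Mtan)))
      + (K*(3*(3*(3*(K*(K*Mtan)))) + (3*(K*Mtan + 3*(K*K)*Mtan) + 3*(K*Mtan + 3*(K*K)*Mtan)))
          + 3*(K*K)*(3*(K*Mtan))) := by
    rw [hstepA, Fin.sum_univ_three]
    refine (abs_add_three _ _ _).trans ?_
    exact add_le_add_three
      ((abs_add_le _ _).trans (add_le_add (hmul' (hgb i 0) hD0) (hmul' (hEb 2 i 0) (hvb 0))))
      ((abs_add_le _ _).trans (add_le_add (hmul' (hgb i 1) hD1) (hmul' (hEb 2 i 1) (hvb 1))))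
      ((abs_add_le _ _).trans (add_le_add (hmul' (hgb i 2) hD2) (hmul' (hEb 2 i 2) (hvb 2))))
  refine hmain.trans ?_
  nlinarith [mul_nonneg (mul_nonneg (mul_nonneg hK0 hK0) hK0) hMω0,
    mul_nonneg (mul_nonneg hK0 hK0) hMω0, hM0, hMω0, hK0,
    mul_nonneg (mul_nonneg (mul_nonneg hK0 hK0) hK0) hM0,
    mul_nonneg (mul_nonneg hK0 hK0) hM0]
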